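/- arXiv:2208.04179 — 3 statements merged into one kernel-verified Lean document; each statement's English description precedes it below -/
import Mathlib

section
/- Let G be a graph with maximum degree Δ, let e = rs ∈ E(G), and let φ be a proper Δ-edge-coloring of G − e. If the vertex set V(G) is elementary with respect to φ (no color is missing at two distinct vertices), then n is odd and |E(G)| = Δ·(n−1)/2 + 1; in particular G is overfull. -/
/-!
In `G - rs` every colour class `M_c`, `c < Δ`, is a matching, so it covers `2 |M_c|` vertices, and
the uncovered ones are exactly those at which `c` is missing. Elementarity lets at most one vertex
miss `c`, so `n - 2 |M_c| ≤ 1`. As `r` has degree at most `Δ - 1` in `G - rs`, some colour `c₀` is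
missing at `r`, whence `n = 2 |M_c₀| + 1` is odd, and then every class has exactly `(n - 1) / 2`
edges. Summing over the `Δ` classes gives `|E(G - rs)| = Δ (n - 1) / 2`.
-/

/-- A proper `k`-edge-coloring: colors are in `[k] = {0, …, k-1}` and edges sharing a
vertex receive distinct colors. -/
def IsProperEdgeColoring {V : Type*} (G : SimpleGraph V) (φ : Sym2 V → ℕ) (k : ℕ) : Prop :=
  (∀ e ∈ G.edgeSet, φ e < k) ∧
  ∀ e ∈ G.edgeSet, ∀ f ∈ G.edgeSet, e ≠ f → (∃ v, v ∈ e ∧ v ∈ f) → φ e ≠ φ f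

/-- The chromatic index `χ'(G)`: least `k` admitting a proper `k`-edge-coloring. -/
noncomputable def chromaticIndex {V : Type*} (G : SimpleGraph V) : ℕ :=
  sInf {k | ∃ φ, IsProperEdgeColoring G φ k}

/-- The set of colors of `[Δ]` missing at `v` under `φ` (w.r.t. the graph `G`). -/
def missing {V : Type*} (G : SimpleGraph V) (φ : Sym2 V → ℕ) (Δ : ℕ) (v : V) : Set ℕ :=
  {c | c < Δ ∧ ∀ e ∈ G.edgeSet, v ∈ e → φ e ≠ c}

open Finset

section ColorClasses

variable {V : Type*} {H : SimpleGraph V} {φ : Sym2 V → ℕ} {k : ℕ}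

def colorClass (H : SimpleGraph V) [Fintype H.edgeSet] (φ : Sym2 V → ℕ) (c : ℕ) :
    Finset (Sym2 V) :=
  {e ∈ H.edgeFinset | φ e = c}

lemma mem_missing_iff_notMem_biUnion_colorClass [DecidableEq V] [Fintype H.edgeSet] {c : ℕ}
    (hc : c < k) (v : V) :
    c ∈ missing H φ k v ↔ v ∉ (colorClass H φ c).biUnion Sym2.toFinset := by
  simp only [missing, colorClass, Set.mem_ofPred_eq, hc, true_and, mem_biUnion, mem_filter,
    SimpleGraph.mem_edgeFinset, Sym2.mem_toFinset, not_exists, not_and]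
  grind

namespace IsProperEdgeColoring

lemma card_biUnion_colorClass [DecidableEq V] [Fintype H.edgeSet]
    (hφ : IsProperEdgeColoring H φ k) (c : ℕ) :
    #((colorClass H φ c).biUnion Sym2.toFinset) = 2 * #(colorClass H φ c) := by
  have hedge : ∀ e ∈ colorClass H φ c, e ∈ H.edgeSet := fun e he ↦
    H.mem_edgeFinset.mp (mem_filter.mp he).1
  rw [card_biUnion, sum_congr rfl fun e he ↦
      Sym2.card_toFinset_of_not_isDiag e (H.not_isDiag_of_mem_edgeSet (hedge e he)),
    sum_const, smul_eq_mul, mul_comm]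
  intro e he f hf hef
  refine disjoint_left.mpr fun v hve hvf ↦ hφ.2 e (hedge e he) f (hedge f hf) hef
    ⟨v, Sym2.mem_toFinset.mp hve, Sym2.mem_toFinset.mp hvf⟩ ?_
  rw [(mem_filter.mp he).2, (mem_filter.mp hf).2]

lemma ncard_setOf_mem_missing_add_two_mul_card_colorClass [Fintype V] [DecidableEq V]
    [Fintype H.edgeSet] (hφ : IsProperEdgeColoring H φ k) {c : ℕ} (hc : c < k) :
    {v | c ∈ missing H φ k v}.ncard + 2 * #(colorClass H φ c) = Fintype.card V := by
  have hset :
      {v | c ∈ missing H φ k v} = ↑(univ \ (colorClass H φ c).biUnion Sym2.toFinset) := by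
    ext v
    simp [mem_missing_iff_notMem_biUnion_colorClass hc]
  rw [hset, Set.ncard_coe_finset, ← hφ.card_biUnion_colorClass,
    card_sdiff_add_card_eq_card (subset_univ _), card_univ]

lemma card_edgeFinset_eq_sum_card_colorClass [Fintype H.edgeSet]
    (hφ : IsProperEdgeColoring H φ k) :
    #H.edgeFinset = ∑ c ∈ range k, #(colorClass H φ c) :=
  card_eq_sum_card_fiberwise fun e he ↦ mem_range.mpr (hφ.1 e (H.mem_edgeFinset.mp he))

end IsProperEdgeColoring

lemma exists_mem_missing_of_degree_lt [Fintype V] [DecidableEq V] [DecidableRel H.Adj]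
    {v : V} (hv : H.degree v < k) : ∃ c, c ∈ missing H φ k v := by
  have hcard : #((H.incidenceFinset v).image φ) < #(range k) :=
    (card_image_le.trans_eq (H.card_incidenceFinset_eq_degree v)).trans_lt
      (hv.trans_eq (card_range k).symm)
  obtain ⟨c, hck, hcv⟩ := exists_mem_notMem_of_card_lt_card hcard
  refine ⟨c, mem_range.mp hck, fun e he hve hφe ↦ hcv (mem_image.mpr ⟨e, ?_, hφe⟩)⟩
  rw [H.incidenceFinset_eq_filter]
  exact mem_filter.mpr ⟨H.mem_edgeFinset.mpr he, hve⟩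

lemma ncard_setOf_mem_missing_le_one [Finite V]
    (helem : ∀ u v : V, u ≠ v → Disjoint (missing H φ k u) (missing H φ k v)) (c : ℕ) :
    {v | c ∈ missing H φ k v}.ncard ≤ 1 :=
  (Set.ncard_le_one).mpr fun u hu v hv ↦ by_contra fun huv ↦
    Set.disjoint_left.mp (helem u v huv) hu hv

end ColorClasses

namespace SimpleGraph

variable {V : Type*} [DecidableEq V] {G : SimpleGraph V}

lemma Adj.degree_deleteEdges_lt [Fintype V] [DecidableRel G.Adj] {r s : V} (he : G.Adj r s) :
    (G.deleteEdges {s(r, s)}).degree r < G.degree r := by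
  simp_rw [← card_neighborFinset_eq_degree]
  refine card_lt_card ((ssubset_iff_of_subset fun v hv ↦ ?_).mpr ⟨s, ?_, ?_⟩) <;>
    simp_all [mem_neighborFinset]

lemma card_edgeFinset_deleteEdges_singleton_add_one {e : Sym2 V} [Fintype G.edgeSet]
    [Fintype (G.deleteEdges {e}).edgeSet] (he : e ∈ G.edgeSet) :
    #(G.deleteEdges {e}).edgeFinset + 1 = #G.edgeFinset := by
  have herase : (G.deleteEdges {e}).edgeFinset = G.edgeFinset.erase e := by
    ext f
    simp [and_comm]
  rw [herase, card_erase_add_one (G.mem_edgeFinset.mpr he)]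

end SimpleGraph

theorem elementary_implies_overfull_general {V : Type*} [Fintype V]
    (G : SimpleGraph V) [DecidableRel G.Adj] (r s : V) (he : G.Adj r s)
    (φ : Sym2 V → ℕ)
    (hφ : IsProperEdgeColoring (G.deleteEdges {s(r, s)}) φ G.maxDegree)
    (helem : ∀ u v : V, u ≠ v →
      Disjoint (missing (G.deleteEdges {s(r, s)}) φ G.maxDegree u)
               (missing (G.deleteEdges {s(r, s)}) φ G.maxDegree v)) :
    Odd (Fintype.card V) ∧
    G.edgeFinset.card = G.maxDegree * ((Fintype.card V - 1) / 2) + 1 ∧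
    G.edgeFinset.card > G.maxDegree * (Fintype.card V / 2) := by
  classical
  set H := G.deleteEdges {s(r, s)}
  set n := Fintype.card V
  set Δ := G.maxDegree
  have hcount c (hc : c < Δ) := hφ.ncard_setOf_mem_missing_add_two_mul_card_colorClass hc
  have hle := ncard_setOf_mem_missing_le_one helem
  obtain ⟨c₀, hc₀⟩ := exists_mem_missing_of_degree_lt
    (he.degree_deleteEdges_lt.trans_le (G.degree_le_maxDegree r))
  have hn : n = 2 * #(colorClass H φ c₀) + 1 := by
    have hpos : 0 < {v | c₀ ∈ missing H φ Δ v}.ncard :=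
      (Set.ncard_pos (Set.toFinite _)).mpr ⟨r, hc₀⟩
    have := hcount c₀ hc₀.1
    have := hle c₀
    omega
  have hclass : ∀ c ∈ range Δ, #(colorClass H φ c) = (n - 1) / 2 := by
    intro c hc
    have := hcount c (mem_range.mp hc)
    have := hle c
    omega
  have hedges : #G.edgeFinset = Δ * ((n - 1) / 2) + 1 := by
    rw [← G.card_edgeFinset_deleteEdges_singleton_add_one (G.mem_edgeSet.mpr he),
      hφ.card_edgeFinset_eq_sum_card_colorClass, sum_congr rfl hclass, sum_const, card_range,
      smul_eq_mul]
  refine ⟨⟨_, hn⟩, hedges, ?_⟩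
  rw [hedges, show n / 2 = (n - 1) / 2 by omega]
  omega

/-- If `V(G)` is elementary w.r.t. a proper `Δ`-edge-coloring of `G - rs`, then `n` is odd,
`|E(G)| = Δ·(n-1)/2 + 1`, and `G` is overfull. -/
theorem elementary_implies_overfull {V : Type*} [Fintype V] [DecidableEq V]
    (G : SimpleGraph V) [DecidableRel G.Adj] (r s : V) (he : G.Adj r s)
    (hclass2 : chromaticIndex G = G.maxDegree + 1)
    (φ : Sym2 V → ℕ)
    (hφ : IsProperEdgeColoring (G.deleteEdges {s(r, s)}) φ G.maxDegree)
    (helem : ∀ u v : V, u ≠ v →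
      Disjoint (missing (G.deleteEdges {s(r, s)}) φ G.maxDegree u)
               (missing (G.deleteEdges {s(r, s)}) φ G.maxDegree v)) :
    Odd (Fintype.card V) ∧
    G.edgeFinset.card = G.maxDegree * ((Fintype.card V - 1) / 2) + 1 ∧
    G.edgeFinset.card > G.maxDegree * (Fintype.card V / 2) :=
  elementary_implies_overfull_general G r s he φ hφ helem
end

section
/- Vizing's Adjacency Lemma: Let G be a class 2 graph with maximum degree Δ and let e = xy be a critical edge of G (i.e., χ'(G−e) < χ'(G)). Then x is adjacent to at least Δ − d(y) + 1 vertices of degree Δ distinct from y. -/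
/-- `G` is `Δ`-critical: `χ'(G) = Δ(G) + 1` and every edge of `G` is critical. -/
def IsDeltaCritical {V : Type*} [Fintype V] [DecidableEq V] (G : SimpleGraph V)
    [DecidableRel G.Adj] : Prop :=
  chromaticIndex G = G.maxDegree + 1 ∧
  ∀ e ∈ G.edgeSet, chromaticIndex (G.deleteEdges {e}) < chromaticIndex G

/-- The degree of `v` in the core `G_Δ` (the subgraph induced by the maximum-degree
vertices): the number of maximum-degree neighbors of `v`. -/
def coreDegree {V : Type*} [Fintype V] [DecidableEq V] (G : SimpleGraph V)
    [DecidableRel G.Adj] (v : V) : ℕ :=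
  ((G.neighborFinset v).filter fun u => G.degree u = G.maxDegree).card

/-!
Colour `G - xy` with `Δ` colours, which is possible because `xy` is critical, and grow Vizing's
fan at `x` from `y`: a vertex `z` joins when `xz` is coloured by a colour missing at a fan
vertex. As `G` itself is not `Δ`-colourable, the sets of colours missing at `x` and at the fan
vertices are pairwise disjoint (shift colours along fan paths, and swap Kempe chains). Every
colour missing at a fan vertex is then the colour of an edge from `x` to a fan vertex other
than `y`, so the missing sets of the fan `F` have at most `|F| - 1` colours in total. Since `y`
misses `Δ - d(y) + 1` colours and every other fan vertex of degree below `Δ` misses one, at least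
`Δ - d(y) + 1` fan vertices other than `y` have degree `Δ`, and they are all neighbours of `x`.
-/

open SimpleGraph Finset

theorem List.IsChain.imp_of_mem_dropLast_imp {α : Type*} {R S : α → α → Prop} {l : List α}
    (H : ∀ a b, a ∈ l.dropLast → R a b → S a b) (p : l.IsChain R) : l.IsChain S := by
  induction p with grind

theorem List.exists_cons_prefix_getLast_eq {α : Type*} {a p : α} :
    ∀ {l : List α}, p ∈ (a :: l).dropLast →
      ∃ l', a :: l' <+: a :: l ∧ (a :: l').getLast (cons_ne_nil _ _) = p ∧
        l'.length < l.length
  | [] => by simp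
  | b :: l => by
    rw [dropLast_cons_cons, mem_cons]
    rintro (rfl | h)
    · exact ⟨[], by simp, rfl, by simp⟩
    · obtain ⟨l', h₁, h₂, h₃⟩ := exists_cons_prefix_getLast_eq h
      exact ⟨b :: l', by simpa using h₁, by simpa using h₂, by simpa using h₃⟩

theorem List.exists_isChain_cons_nodup_of_relationReflTransGen {α : Type*} {R : α → α → Prop}
    {a b : α} (h : Relation.ReflTransGen R a b) :
    ∃ l, (a :: l).IsChain R ∧ (a :: l).getLast (cons_ne_nil _ _) = b ∧ (a :: l).Nodup := by
  induction h using Relation.ReflTransGen.head_induction_on with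
  | refl => exact ⟨[], .singleton _, rfl, nodup_singleton _⟩
  | @head a c hac _ ih =>
    obtain ⟨l, hl, hlast, hnd⟩ := ih
    by_cases ha : a ∈ c :: l
    · obtain ⟨l₁, l₂, hsplit⟩ := append_of_mem ha
      refine ⟨l₂, hl.suffix ⟨l₁, hsplit.symm⟩, ?_,
        hnd.sublist (hsplit ▸ sublist_append_right ..)⟩
      simpa [hsplit, getLast_append_of_ne_nil] using hlast
    · exact ⟨c :: l, hl.cons_cons hac, by simpa using hlast, nodup_cons.2 ⟨ha, hnd⟩⟩

section

variable {V : Type*}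

section Degree
variable [Fintype V] [DecidableEq V] {G : SimpleGraph V} [DecidableRel G.Adj] {e : Sym2 V}
  {v : V}

theorem degree_deleteEdges_add_one (he : e ∈ G.edgeSet) (hv : v ∈ e) :
    (G.deleteEdges {e}).degree v + 1 = G.degree v := by
  obtain ⟨w, rfl⟩ := Sym2.mem_iff_exists.1 hv
  have : (G.deleteEdges {s(v, w)}).neighborFinset v = (G.neighborFinset v).erase w := by
    ext u
    simp [G.ne_of_adj he, and_comm]
  rw [← card_neighborFinset_eq_degree, this, card_erase_add_one ((mem_neighborFinset ..).2 he),
    card_neighborFinset_eq_degree]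

theorem degree_deleteEdges_of_notMem (hv : v ∉ e) :
    (G.deleteEdges {e}).degree v = G.degree v := by
  have : (G.deleteEdges {e}).neighborFinset v = G.neighborFinset v := by
    ext u
    simp only [mem_neighborFinset, deleteEdges_adj, Set.mem_singleton_iff, and_iff_left_iff_imp]
    rintro - rfl
    exact hv (Sym2.mem_mk_left v u)
  rw [← card_neighborFinset_eq_degree, this, card_neighborFinset_eq_degree]

end Degree

theorem le_card_filter_eq_zero_of_sum_add_le {ι : Type*} {A : Finset ι} {f : ι → ℕ} {k : ℕ}
    (h : ∑ i ∈ A, f i + k ≤ #A) : k ≤ #(A.filter (f · = 0)) := by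
  have hpos : #(A.filter (¬ f · = 0)) ≤ ∑ i ∈ A, f i := by
    simpa using (card_nsmul_le_sum _ f 1 fun i hi => Nat.one_le_iff_ne_zero.2
      (mem_filter.1 hi).2).trans (sum_le_sum_of_subset (filter_subset _ A))
  have := card_filter_add_card_filter_not (s := A) (p := (f · = 0))
  omega

theorem sum_add_card_le_two_mul_card [Fintype V] [DecidableEq V] {f : V → ℕ} {s : Finset V}
    (hf : ∀ v, f v ≤ 2) (hs : ∀ v ∈ s, f v ≤ 1) :
    ∑ v, f v + #s ≤ 2 * Fintype.card V := by
  have h₁ : ∑ v ∈ univ \ s, f v ≤ #(univ \ s) • 2 :=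
    sum_le_card_nsmul _ _ _ fun v _ => hf v
  have h₂ : ∑ v ∈ s, f v ≤ #s • 1 := sum_le_card_nsmul _ _ _ hs
  rw [← sum_sdiff (subset_univ s), ← card_univ, ← card_sdiff_add_card_eq_card (subset_univ s)]
  simp only [smul_eq_mul] at h₁ h₂
  omega

/-- The component `C` of `a` has at least `|C| - 1` edges, but degree sum at most `2|C| - 3`. -/
theorem eq_or_eq_or_eq_of_reachable_of_degree_le_one [Fintype V] {Γ : SimpleGraph V}
    [DecidableRel Γ.Adj] (hdeg : ∀ v, Γ.degree v ≤ 2) {a b c : V} (ha : Γ.degree a ≤ 1)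
    (hb : Γ.degree b ≤ 1) (hc : Γ.degree c ≤ 1) (hab : Γ.Reachable a b)
    (hac : Γ.Reachable a c) : a = b ∨ a = c ∨ b = c := by
  classical
  by_contra! hne
  let C := Γ.connectedComponentMk a
  have hmem {v : V} (hv : Γ.Reachable a v) : v ∈ C.supp := ConnectedComponent.sound hv.symm
  have hdegC (v : C.supp) : (Γ.induce C.supp).degree v ≤ Γ.degree v :=
    (Copy.induce Γ C.supp).degree_le v
  have hconn : (Γ.induce C.supp).Connected := C.connected_toSimpleGraph
  have hedges := hconn.card_vert_le_card_edgeSet_add_one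
  rw [Nat.card_eq_fintype_card, Nat.card_eq_fintype_card, ← edgeFinset_card,
    ← Nat.mul_le_mul_left_iff two_pos, mul_add, ← sum_degrees_eq_twice_card_edges] at hedges
  let ends : Finset C.supp := {⟨a, hmem .rfl⟩, ⟨b, hmem hab⟩, ⟨c, hmem hac⟩}
  have hends : #ends = 3 := by simp [ends, card_insert_of_notMem, hne.1, hne.2.1, hne.2.2]
  have := sum_add_card_le_two_mul_card (f := fun v : C.supp => (Γ.induce C.supp).degree v)
    (s := ends) (fun v => (hdegC v).trans (hdeg v)) (by
      simp only [ends, mem_insert, mem_singleton]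
      rintro v (rfl | rfl | rfl)
      exacts [(hdegC _).trans ha, (hdegC _).trans hb, (hdegC _).trans hc])
  omega

section EdgeColoring

variable {H H' : SimpleGraph V} {φ : Sym2 V → ℕ} {k : ℕ}

theorem isProperEdgeColoring_iff :
    IsProperEdgeColoring H φ k ↔ (∀ ⦃a b⦄, H.Adj a b → φ s(a, b) < k) ∧
      ∀ ⦃a b c⦄, H.Adj a b → H.Adj a c → b ≠ c → φ s(a, b) ≠ φ s(a, c) := by
  refine ⟨fun ⟨hlt, hne⟩ => ⟨fun a b hab => hlt _ hab, fun a b c hab hac hbc => ?_⟩,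
    fun ⟨hlt, hne⟩ => ⟨fun e he => ?_, fun e he f hf hef ⟨v, hve, hvf⟩ => ?_⟩⟩
  · exact hne _ hab _ hac (fun h => hbc (Sym2.congr_right.1 h))
      ⟨a, Sym2.mem_mk_left a b, Sym2.mem_mk_left a c⟩
  · induction e with | h a b => exact hlt he
  · obtain ⟨b, rfl⟩ := Sym2.mem_iff_exists.1 hve
    obtain ⟨c, rfl⟩ := Sym2.mem_iff_exists.1 hvf
    exact hne he hf (by rintro rfl; exact hef rfl)

namespace IsProperEdgeColoring

theorem lt (h : IsProperEdgeColoring H φ k) {a b : V} (hab : H.Adj a b) : φ s(a, b) < k :=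
  (isProperEdgeColoring_iff.1 h).1 hab

theorem ne {a b c : V} (h : IsProperEdgeColoring H φ k) (hab : H.Adj a b) (hac : H.Adj a c)
    (hbc : b ≠ c) : φ s(a, b) ≠ φ s(a, c) :=
  (isProperEdgeColoring_iff.1 h).2 hab hac hbc

theorem mono {k' : ℕ} (h : IsProperEdgeColoring H φ k) (hk : k ≤ k') :
    IsProperEdgeColoring H φ k' :=
  isProperEdgeColoring_iff.2 ⟨fun _ _ hab => (h.lt hab).trans_le hk, fun _ _ _ => h.ne⟩

theorem anti (h : IsProperEdgeColoring H φ k) (hle : H' ≤ H) : IsProperEdgeColoring H' φ k :=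
  isProperEdgeColoring_iff.2
    ⟨fun _ _ hab => h.lt (hle hab), fun _ _ _ hab hac => h.ne (hle hab) (hle hac)⟩

end IsProperEdgeColoring

theorem chromaticIndex_le (h : IsProperEdgeColoring H φ k) : chromaticIndex H ≤ k :=
  Nat.sInf_le ⟨φ, h⟩

theorem exists_isProperEdgeColoring_chromaticIndex [Fintype V] (H : SimpleGraph V) :
    ∃ φ, IsProperEdgeColoring H φ (chromaticIndex H) := by
  classical
  let f := Fintype.equivFin (Sym2 V)
  have hcol : IsProperEdgeColoring H (fun e => f e) (Fintype.card (Sym2 V)) :=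
    isProperEdgeColoring_iff.2 ⟨fun _ _ _ => (f _).2,
      fun a b c _ _ hbc heq => hbc (Sym2.congr_right.1 (f.injective (Fin.ext heq)))⟩
  exact Nat.sInf_mem (s := {k | ∃ φ, IsProperEdgeColoring H φ k}) ⟨_, _, hcol⟩

variable [Fintype V]

variable (H) in
def missingColors [DecidableRel H.Adj] (φ : Sym2 V → ℕ) (k : ℕ) (v : V) : Finset ℕ :=
  (range k).filter fun c => ∀ u, H.Adj v u → φ s(v, u) ≠ c

variable [DecidableRel H.Adj] {v : V} {c : ℕ}

theorem mem_missingColors :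
    c ∈ missingColors H φ k v ↔ c < k ∧ ∀ u, H.Adj v u → φ s(v, u) ≠ c := by
  rw [missingColors, mem_filter, mem_range]

theorem card_missingColors_add_degree (h : IsProperEdgeColoring H φ k) (v : V) :
    #(missingColors H φ k v) + H.degree v = k := by
  have himg : (H.neighborFinset v).image (fun u => φ s(v, u)) ⊆ range k := by
    simpa [subset_iff] using fun u hu => h.lt hu
  have hinj : Set.InjOn (fun u => φ s(v, u)) (H.neighborFinset v) := fun a ha b hb hab => by
    by_contra hne
    exact h.ne ((mem_neighborFinset ..).1 ha) ((mem_neighborFinset ..).1 hb) hne hab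
  have hmiss :
      missingColors H φ k v = range k \ (H.neighborFinset v).image (fun u => φ s(v, u)) := by
    ext c
    simp only [mem_missingColors, mem_sdiff, mem_range, mem_image, mem_neighborFinset]
    grind
  have hle := card_le_card himg
  rw [card_image_of_injOn hinj, card_range] at hle
  rw [hmiss, card_sdiff_of_subset himg, card_image_of_injOn hinj, card_range]
  exact Nat.sub_add_cancel hle

theorem mem_missingColors_of_le {H' : SimpleGraph V} [DecidableRel H'.Adj] (hle : H' ≤ H)
    (hc : c ∈ missingColors H φ k v) : c ∈ missingColors H' φ k v := by
  rw [mem_missingColors] at hc ⊢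
  exact ⟨hc.1, fun u hu => hc.2 u (hle hu)⟩

end EdgeColoring

section Update
variable [Fintype V] [DecidableEq V] {H : SimpleGraph V} [DecidableRel H.Adj] {φ : Sym2 V → ℕ}
  {k c : ℕ} {a b : V}

theorem IsProperEdgeColoring.update (h : IsProperEdgeColoring (H.deleteEdges {s(a, b)}) φ k)
    (hab : H.Adj a b) (ha : c ∈ missingColors (H.deleteEdges {s(a, b)}) φ k a)
    (hb : c ∈ missingColors (H.deleteEdges {s(a, b)}) φ k b) :
    IsProperEdgeColoring H (Function.update φ s(a, b) c) k := by
  have hdel {p q : V} (hpq : H.Adj p q) (hne : s(p, q) ≠ s(a, b)) :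
      (H.deleteEdges {s(a, b)}).Adj p q := deleteEdges_adj.2 ⟨hpq, hne⟩
  have hend {p q : V} (he : s(p, q) = s(a, b)) :
      c ∈ missingColors (H.deleteEdges {s(a, b)}) φ k p := by
    rcases Sym2.eq_iff.1 he with ⟨rfl, -⟩ | ⟨rfl, -⟩ <;> assumption
  have key {p q q' : V} (hpq' : H.Adj p q') (hqq' : q ≠ q') (he : s(p, q) = s(a, b)) :
      Function.update φ s(a, b) c s(p, q) ≠ Function.update φ s(a, b) c s(p, q') := by
    have he' : s(p, q') ≠ s(a, b) := he ▸ fun h' => hqq' (Sym2.congr_right.1 h').symm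
    rw [he, Function.update_self, Function.update_of_ne he']
    exact ((mem_missingColors.1 (hend he)).2 q' (hdel hpq' he')).symm
  refine isProperEdgeColoring_iff.2 ⟨fun p q hpq => ?_, fun p q q' hpq hpq' hqq' => ?_⟩
  · by_cases he : s(p, q) = s(a, b)
    · simpa [he] using (mem_missingColors.1 ha).1
    · rw [Function.update_of_ne he]
      exact h.lt (hdel hpq he)
  · by_cases he : s(p, q) = s(a, b)
    · exact key hpq' hqq' he
    by_cases he' : s(p, q') = s(a, b)
    · exact (key hpq hqq'.symm he').symm
    rw [Function.update_of_ne he, Function.update_of_ne he']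
    exact h.ne (hdel hpq he) (hdel hpq' he') hqq'

theorem mem_missingColors_deleteEdges_self (h : IsProperEdgeColoring H φ k)
    (hab : H.Adj a b) : φ s(a, b) ∈ missingColors (H.deleteEdges {s(a, b)}) φ k a := by
  refine mem_missingColors.2 ⟨h.lt hab, fun u hu => ?_⟩
  rw [deleteEdges_adj, Set.mem_singleton_iff, Sym2.congr_right] at hu
  exact h.ne hu.1 hab hu.2

end Update

section Kempe
variable {H : SimpleGraph V} {φ : Sym2 V → ℕ} {k β γ : ℕ} {z a b : V}

variable (H φ β γ) in
/-- Its components are the `(β, γ)`-Kempe chains. -/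
def kempeGraph : SimpleGraph V where
  Adj a b := H.Adj a b ∧ (φ s(a, b) = β ∨ φ s(a, b) = γ)
  symm := ⟨fun _ _ h => ⟨h.1.symm, by rw [Sym2.eq_swap]; exact h.2⟩⟩
  loopless := ⟨fun _ h => H.irrefl h.1⟩

instance [DecidableRel H.Adj] : DecidableRel (kempeGraph H φ β γ).Adj :=
  fun _ _ => inferInstanceAs (Decidable (_ ∧ _))

variable (H φ β γ) in
open Classical in
/-- Swap `β` and `γ` on the Kempe chain through `z`. Edges at the chain with another colour are
left alone, because `Equiv.swap β γ` fixes that colour. -/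
noncomputable def kempeSwap (z : V) : Sym2 V → ℕ :=
  fun e => if ∃ a ∈ e, (kempeGraph H φ β γ).Reachable z a then Equiv.swap β γ (φ e)
    else φ e

theorem kempeSwap_of_reachable (ha : (kempeGraph H φ β γ).Reachable z a) (b : V) :
    kempeSwap H φ β γ z s(a, b) = Equiv.swap β γ (φ s(a, b)) := by
  classical
  rw [kempeSwap, ite_eq_left_iff]
  exact fun h => absurd ⟨a, Sym2.mem_mk_left a b, ha⟩ h

theorem kempeSwap_of_not_reachable (ha : ¬ (kempeGraph H φ β γ).Reachable z a)
    (hab : H.Adj a b) : kempeSwap H φ β γ z s(a, b) = φ s(a, b) := by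
  classical
  rw [kempeSwap, ite_eq_right_iff]
  rintro ⟨c, hc, hzc⟩
  rcases Sym2.mem_iff.1 hc with rfl | rfl
  · exact absurd hzc ha
  · by_cases hcol : φ s(a, c) = β ∨ φ s(a, c) = γ
    · exact absurd (hzc.trans (Adj.reachable ⟨hab.symm, by rwa [Sym2.eq_swap]⟩)) ha
    · push Not at hcol
      exact Equiv.swap_apply_of_ne_of_ne hcol.1 hcol.2

theorem Equiv.swap_apply_lt (hβ : β < k) (hγ : γ < k) {c : ℕ} (hc : c < k) :
    Equiv.swap β γ c < k := by
  rw [Equiv.swap_apply_def]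
  split_ifs <;> assumption

theorem IsProperEdgeColoring.kempeSwap (h : IsProperEdgeColoring H φ k) (hβ : β < k)
    (hγ : γ < k) (z : V) : IsProperEdgeColoring H (kempeSwap H φ β γ z) k := by
  refine isProperEdgeColoring_iff.2 ⟨fun a b hab => ?_, fun a b c hab hac hbc => ?_⟩
  · by_cases ha : (kempeGraph H φ β γ).Reachable z a
    · rw [kempeSwap_of_reachable ha]
      exact Equiv.swap_apply_lt hβ hγ (h.lt hab)
    · rw [kempeSwap_of_not_reachable ha hab]
      exact h.lt hab
  · by_cases ha : (kempeGraph H φ β γ).Reachable z a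
    · rw [kempeSwap_of_reachable ha, kempeSwap_of_reachable ha, (Equiv.injective _).ne_iff]
      exact h.ne hab hac hbc
    · rw [kempeSwap_of_not_reachable ha hab, kempeSwap_of_not_reachable ha hac]
      exact h.ne hab hac hbc

variable [Fintype V] [DecidableRel H.Adj] {c : ℕ}

theorem mem_missingColors_kempeSwap_of_not_reachable
    (ha : ¬ (kempeGraph H φ β γ).Reachable z a) :
    c ∈ missingColors H (kempeSwap H φ β γ z) k a ↔ c ∈ missingColors H φ k a := by
  simp +contextual only [mem_missingColors, kempeSwap_of_not_reachable ha]

theorem mem_missingColors_kempeSwap_of_reachable (ha : (kempeGraph H φ β γ).Reachable z a)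
    (hβ : β < k) (hγ : γ < k) :
    c ∈ missingColors H (kempeSwap H φ β γ z) k a ↔
      Equiv.swap β γ c ∈ missingColors H φ k a := by
  simp only [mem_missingColors, kempeSwap_of_reachable ha, ne_eq, Equiv.swap_apply_eq_iff]
  refine and_congr_left fun _ => ⟨Equiv.swap_apply_lt hβ hγ, fun h => ?_⟩
  simpa using Equiv.swap_apply_lt hβ hγ h

theorem degree_kempeGraph_le (h : IsProperEdgeColoring H φ k) (v : V) :
    (kempeGraph H φ β γ).degree v ≤ #({β, γ} \ missingColors H φ k v) := by
  rw [← card_neighborFinset_eq_degree]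
  refine card_le_card_of_injOn (fun u => φ s(v, u)) (fun u hu => ?_) fun u hu w hw huw => ?_
  · obtain ⟨hvu, hcol⟩ := (mem_neighborFinset _ _ _).1 hu
    simp only [coe_sdiff, Set.mem_sdiff, coe_insert, coe_singleton, Set.mem_insert_iff,
      Set.mem_singleton_iff, mem_coe, mem_missingColors, not_and, not_forall, not_not]
    exact ⟨hcol, fun _ => ⟨u, hvu, rfl⟩⟩
  · by_contra hne
    exact h.ne ((mem_neighborFinset _ _ _).1 hu).1 ((mem_neighborFinset _ _ _).1 hw).1 hne huw

theorem degree_kempeGraph_le_two (h : IsProperEdgeColoring H φ k) (v : V) :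
    (kempeGraph H φ β γ).degree v ≤ 2 :=
  (degree_kempeGraph_le h v).trans ((card_le_card sdiff_subset).trans card_le_two)

theorem degree_kempeGraph_le_one (h : IsProperEdgeColoring H φ k) {v : V}
    (hv : β ∈ missingColors H φ k v ∨ γ ∈ missingColors H φ k v) :
    (kempeGraph H φ β γ).degree v ≤ 1 := by
  refine (degree_kempeGraph_le h v).trans ?_
  rcases hv with hv | hv
  · exact (card_le_card (by simp [subset_iff, hv])).trans (card_singleton γ).le
  · exact (card_le_card (by simp [subset_iff, hv])).trans (card_singleton β).le

end Kempe

section Fan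

variable [Fintype V] [DecidableEq V] {G : SimpleGraph V} [DecidableRel G.Adj] {x : V}
  {φ : Sym2 V → ℕ} {r z v : V} {c : ℕ}

variable (G x) in
def FanStep (φ : Sym2 V → ℕ) (r u z : V) : Prop :=
  (G.deleteEdges {s(x, r)}).Adj x z ∧
    φ s(x, z) ∈ missingColors (G.deleteEdges {s(x, r)}) φ G.maxDegree u

namespace FanStep

theorem right_ne {u : V} (h : FanStep G x φ r u z) : z ≠ x :=
  fun hzx => (G.deleteEdges {s(x, r)}).irrefl (hzx ▸ h.1)

theorem left_ne {u : V} (h : FanStep G x φ r u z) : u ≠ x := by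
  rintro rfl
  exact (mem_missingColors.1 h.2).2 z h.1 rfl

theorem isProperEdgeColoring_shift (hz : FanStep G x φ r r z) (hxr : G.Adj x r)
    (hφ : IsProperEdgeColoring (G.deleteEdges {s(x, r)}) φ G.maxDegree) :
    IsProperEdgeColoring (G.deleteEdges {s(x, z)}) (Function.update φ s(x, r) (φ s(x, z)))
      G.maxDegree := by
  have hle : (G.deleteEdges {s(x, z)}).deleteEdges {s(x, r)} ≤
      (G.deleteEdges {s(x, r)}).deleteEdges {s(x, z)} := by
    simp only [deleteEdges_deleteEdges, Set.union_comm, le_refl]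
  have hzr : s(x, r) ≠ s(x, z) := fun h => (deleteEdges_adj.1 hz.1).2 h.symm
  refine IsProperEdgeColoring.update (hφ.anti (hle.trans (deleteEdges_le _)))
    (deleteEdges_adj.2 ⟨hxr, hzr⟩) ?_ ?_
  · exact mem_missingColors_of_le hle (mem_missingColors_deleteEdges_self hφ hz.1)
  · exact mem_missingColors_of_le (hle.trans (deleteEdges_le _)) hz.2

theorem mem_missingColors_shift_center (hz : FanStep G x φ r r z)
    (hc : c ∈ missingColors (G.deleteEdges {s(x, r)}) φ G.maxDegree x) :
    c ∈ missingColors (G.deleteEdges {s(x, z)}) (Function.update φ s(x, r) (φ s(x, z)))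
      G.maxDegree x := by
  rw [mem_missingColors] at hc ⊢
  refine ⟨hc.1, fun u hu => ?_⟩
  rw [deleteEdges_adj, Set.mem_singleton_iff, Sym2.congr_right] at hu
  by_cases hur : u = r
  · rw [hur, Function.update_self]
    exact hc.2 z hz.1
  · have hne : s(x, u) ≠ s(x, r) := fun h => hur (Sym2.congr_right.1 h)
    rw [Function.update_of_ne hne]
    exact hc.2 u (deleteEdges_adj.2 ⟨hu.1, hne⟩)

end FanStep

theorem mem_missingColors_update_of_ne {w : V} (hwx : w ≠ x) (hwr : w ≠ r) (d : ℕ)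
    (hc : c ∈ missingColors (G.deleteEdges {s(x, r)}) φ G.maxDegree w) :
    c ∈ missingColors (G.deleteEdges {s(x, z)}) (Function.update φ s(x, r) d) G.maxDegree w := by
  rw [mem_missingColors] at hc ⊢
  refine ⟨hc.1, fun u hu => ?_⟩
  have hne : s(w, u) ≠ s(x, r) := by simp [hwx, hwr]
  rw [Function.update_of_ne hne]
  exact hc.2 u (deleteEdges_adj.2 ⟨(deleteEdges_adj.1 hu).1, hne⟩)

theorem FanStep.isChain_shift {l : List V} (hz : FanStep G x φ r r z)
    (hl : (z :: l).IsChain (FanStep G x φ r)) (hnd : (r :: z :: l).Nodup) :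
    (z :: l).IsChain (FanStep G x (Function.update φ s(x, r) (φ s(x, z))) z) := by
  refine hl.imp_of_mem_tail_imp fun a b ha hb hab => ?_
  have hbr : b ≠ r := by rintro rfl; simp_all
  have hbz : b ≠ z := by rintro rfl; simp_all
  have har : a ≠ r := by rintro rfl; simp_all
  have hxb : s(x, b) ≠ s(x, r) := fun h => hbr (Sym2.congr_right.1 h)
  refine ⟨deleteEdges_adj.2 ⟨(deleteEdges_adj.1 hab.1).1,
    fun h => hbz (Sym2.congr_right.1 h)⟩, ?_⟩
  rw [Function.update_of_ne hxb]
  exact mem_missingColors_update_of_ne hab.left_ne har _ hab.2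

theorem ne_of_mem_of_isChain_fanStep {l : List V} (hxr : G.Adj x r)
    (hl : (r :: l).IsChain (FanStep G x φ r)) : ∀ v ∈ r :: l, v ≠ x := by
  simp only [List.forall_mem_cons]
  exact ⟨hxr.ne.symm, hl.cons_induction _ _ (fun _ _ h _ => h.right_ne) hxr.ne.symm⟩

variable (G x) in
def IsFanPath (φ : Sym2 V → ℕ) (r : V) (l : List V) (w : V) : Prop :=
  (r :: l).IsChain (FanStep G x φ r) ∧ (r :: l).Nodup ∧
    (r :: l).getLast (List.cons_ne_nil _ _) = w

theorem exists_isFanPath_of_reflTransGen {w : V}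
    (h : Relation.ReflTransGen (FanStep G x φ r) r w) : ∃ l, IsFanPath G x φ r l w := by
  obtain ⟨l, hl, hlast, hnd⟩ := List.exists_isChain_cons_nodup_of_relationReflTransGen h
  exact ⟨l, hl, hnd, hlast⟩

theorem IsFanPath.exists_of_mem_dropLast {l : List V} {w p : V} (h : IsFanPath G x φ r l w)
    (hp : p ∈ (r :: l).dropLast) : ∃ l', IsFanPath G x φ r l' p ∧ l'.length < l.length := by
  obtain ⟨l', hpre, hlast, hlen⟩ := List.exists_cons_prefix_getLast_eq hp
  exact ⟨l', ⟨h.1.prefix hpre, h.2.1.sublist hpre.sublist, hlast⟩, hlen⟩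

theorem IsFanPath.ne {l : List V} {w : V} (h : IsFanPath G x φ r l w) (hxr : G.Adj x r) :
    w ≠ x :=
  h.2.2 ▸ ne_of_mem_of_isChain_fanStep hxr h.1 _ (List.getLast_mem _)

/-- Shift along the path: recolour `xr` with the colour of `xz`, for `z` the next vertex, and
recurse on the rest of the path, which is a fan path for the new colouring rooted at `z`. -/
theorem exists_isProperEdgeColoring_of_isFanPath :
    ∀ {φ : Sym2 V → ℕ} {r w : V} {l : List V}, G.Adj x r →
      IsProperEdgeColoring (G.deleteEdges {s(x, r)}) φ G.maxDegree → IsFanPath G x φ r l w →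
      c ∈ missingColors (G.deleteEdges {s(x, r)}) φ G.maxDegree x →
      c ∈ missingColors (G.deleteEdges {s(x, r)}) φ G.maxDegree w →
      ∃ ψ, IsProperEdgeColoring G ψ G.maxDegree
  | _, _, _, [], hxr, hφ, ⟨_, _, rfl⟩, hx, hr => ⟨_, hφ.update hxr hx hr⟩
  | φ, r, w, z :: l, hxr, hφ, ⟨hl, hnd, hlast⟩, hx, hw => by
    have hz : FanStep G x φ r r z := (List.isChain_cons_cons.1 hl).1
    have hwx : w ≠ x := IsFanPath.ne ⟨hl, hnd, hlast⟩ hxr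
    have hwr : w ≠ r := fun h => (List.nodup_cons.1 hnd).1 (h ▸ hlast ▸ List.getLast_mem _)
    rw [List.getLast_cons_cons] at hlast
    exact exists_isProperEdgeColoring_of_isFanPath (deleteEdges_adj.1 hz.1).1
      (hz.isProperEdgeColoring_shift hxr hφ) ⟨hz.isChain_shift hl.tail hnd, hnd.of_cons, hlast⟩
      (hz.mem_missingColors_shift_center hx) (mem_missingColors_update_of_ne hwx hwr _ hw)

theorem missingColors_center_nonempty (hxr : G.Adj x r)
    (hφ : IsProperEdgeColoring (G.deleteEdges {s(x, r)}) φ G.maxDegree) :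
    (missingColors (G.deleteEdges {s(x, r)}) φ G.maxDegree x).Nonempty := by
  have := card_missingColors_add_degree hφ x
  have := degree_deleteEdges_add_one hxr (Sym2.mem_mk_left x r)
  have := G.degree_le_maxDegree x
  exact card_pos.1 (by omega)

/-- Swapping the chain through `w` makes `w` miss `β`, like `x`. If no earlier vertex of the path
on that chain missed `γ`, the path would survive the swap and shifting would colour `G`. -/
theorem exists_mem_dropLast_of_not_reachable
    (hno : ∀ ψ, ¬ IsProperEdgeColoring G ψ G.maxDegree) (hxr : G.Adj x r)
    (hφ : IsProperEdgeColoring (G.deleteEdges {s(x, r)}) φ G.maxDegree)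
    {l : List V} {w : V} {β γ : ℕ} (hp : IsFanPath G x φ r l w)
    (hβ : β ∈ missingColors (G.deleteEdges {s(x, r)}) φ G.maxDegree x)
    (hγ : γ ∈ missingColors (G.deleteEdges {s(x, r)}) φ G.maxDegree w)
    (hwx : ¬ (kempeGraph (G.deleteEdges {s(x, r)}) φ β γ).Reachable w x) :
    ∃ p ∈ (r :: l).dropLast, (kempeGraph (G.deleteEdges {s(x, r)}) φ β γ).Reachable w p ∧
      γ ∈ missingColors (G.deleteEdges {s(x, r)}) φ G.maxDegree p := by
  by_contra! hoff
  have hβΔ := (mem_missingColors.1 hβ).1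
  have hγΔ := (mem_missingColors.1 hγ).1
  have hchain : (r :: l).IsChain
      (FanStep G x (kempeSwap (G.deleteEdges {s(x, r)}) φ β γ w) r) := by
    refine hp.1.imp_of_mem_dropLast_imp fun a b ha hab => ⟨hab.1, ?_⟩
    rw [kempeSwap_of_not_reachable hwx hab.1]
    by_cases hwa : (kempeGraph (G.deleteEdges {s(x, r)}) φ β γ).Reachable w a
    · rw [mem_missingColors_kempeSwap_of_reachable hwa hβΔ hγΔ,
        Equiv.swap_apply_of_ne_of_ne ((mem_missingColors.1 hβ).2 b hab.1)]
      · exact hab.2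
      · exact fun h => hoff a ha hwa (h ▸ hab.2)
    · exact (mem_missingColors_kempeSwap_of_not_reachable hwa).2 hab.2
  refine hno _ (exists_isProperEdgeColoring_of_isFanPath hxr (hφ.kempeSwap hβΔ hγΔ w)
    ⟨hchain, hp.2⟩ ((mem_missingColors_kempeSwap_of_not_reachable hwx).2 hβ) ?_).choose_spec
  rw [mem_missingColors_kempeSwap_of_reachable .rfl hβΔ hγΔ, Equiv.swap_apply_left]
  exact hγ

/-- Induction on the total length of the two paths. If `u` and `v` miss `γ` and `x` misses `β`,
the `(β, γ)`-chains are paths, so `x`, `u`, `v` do not lie on a single one; the Kempe step at `u`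
or at `v` then gives an earlier path vertex missing `γ`, hence a pair of shorter paths. -/
theorem disjoint_missingColors_of_isFanPath (hno : ∀ ψ, ¬ IsProperEdgeColoring G ψ G.maxDegree)
    (hxr : G.Adj x r) (hφ : IsProperEdgeColoring (G.deleteEdges {s(x, r)}) φ G.maxDegree)
    {lu lv : List V} {u v : V} (hu : IsFanPath G x φ r lu u) (hv : IsFanPath G x φ r lv v)
    (huv : u ≠ v) :
    Disjoint (missingColors (G.deleteEdges {s(x, r)}) φ G.maxDegree u)
      (missingColors (G.deleteEdges {s(x, r)}) φ G.maxDegree v) := by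
  induction hn : lu.length + lv.length using Nat.strong_induction_on generalizing lu lv u v with
  | _ n ih =>
  wlog hlen : lu.length ≤ lv.length generalizing lu lv u v
  · exact (this hv hu huv.symm (by omega) (by omega)).symm
  refine disjoint_left.2 fun γ hγu hγv => ?_
  obtain ⟨β, hβ⟩ := missingColors_center_nonempty hxr hφ
  have hβγ : β ≠ γ := by
    rintro rfl
    exact hno _ (exists_isProperEdgeColoring_of_isFanPath hxr hφ hu hβ hγu).choose_spec
  have hthree {a : V} (hx : (kempeGraph (G.deleteEdges {s(x, r)}) φ β γ).Reachable a x)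
      (hu' : (kempeGraph (G.deleteEdges {s(x, r)}) φ β γ).Reachable a u)
      (hv' : (kempeGraph (G.deleteEdges {s(x, r)}) φ β γ).Reachable a v) : False := by
    rcases eq_or_eq_or_eq_of_reachable_of_degree_le_one (degree_kempeGraph_le_two hφ)
      (degree_kempeGraph_le_one hφ (.inl hβ)) (degree_kempeGraph_le_one hφ (.inr hγu))
      (degree_kempeGraph_le_one hφ (.inr hγv)) (hx.symm.trans hu') (hx.symm.trans hv')
      with h | h | h
    · exact hu.ne hxr h.symm
    · exact hv.ne hxr h.symm
    · exact huv h
  by_cases hux : (kempeGraph (G.deleteEdges {s(x, r)}) φ β γ).Reachable u x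
  · obtain ⟨p, hp, hvp, hγp⟩ := exists_mem_dropLast_of_not_reachable hno hxr hφ hv hβ hγv
      fun hvx => hthree hux .rfl (hux.trans hvx.symm)
    obtain ⟨lp, hlp, hlt⟩ := hv.exists_of_mem_dropLast hp
    have hpu : p ≠ u := by
      rintro rfl
      exact hthree hux .rfl hvp.symm
    exact disjoint_left.1 (ih _ (by omega) hlp hu hpu rfl) hγp hγu
  · obtain ⟨p, hp, -, hγp⟩ := exists_mem_dropLast_of_not_reachable hno hxr hφ hu hβ hγu hux
    obtain ⟨lp, hlp, hlt⟩ := hu.exists_of_mem_dropLast hp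
    by_cases hpv : p = v
    · subst hpv
      exact disjoint_left.1 (ih _ (by omega) hlp hu huv.symm rfl) hγp hγu
    · exact disjoint_left.1 (ih _ (by omega) hlp hv hpv rfl) hγp hγv

variable (G x) in
open Classical in
noncomputable def fan (φ : Sym2 V → ℕ) (r : V) : Finset V :=
  univ.filter (Relation.ReflTransGen (FanStep G x φ r) r)

theorem mem_fan : v ∈ fan G x φ r ↔ Relation.ReflTransGen (FanStep G x φ r) r v := by
  classical
  simp [fan]

theorem adj_of_mem_fan (hv : v ∈ fan G x φ r) (hvr : v ≠ r) :
    (G.deleteEdges {s(x, r)}).Adj x v := by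
  rcases (mem_fan.1 hv).cases_tail with rfl | ⟨_, _, hstep⟩
  · exact absurd rfl hvr
  · exact hstep.1

/-- The missing sets are disjoint, and by shifting, each colour missing in the fan colours an edge
from `x` to a fan vertex other than `r`. -/
theorem sum_card_missingColors_fan_lt (hno : ∀ ψ, ¬ IsProperEdgeColoring G ψ G.maxDegree)
    (hxr : G.Adj x r) (hφ : IsProperEdgeColoring (G.deleteEdges {s(x, r)}) φ G.maxDegree) :
    ∑ v ∈ fan G x φ r, #(missingColors (G.deleteEdges {s(x, r)}) φ G.maxDegree v) <
      #(fan G x φ r) := by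
  have hdisj : (fan G x φ r : Set V).PairwiseDisjoint
      (missingColors (G.deleteEdges {s(x, r)}) φ G.maxDegree) := fun u hu v hv huv => by
    obtain ⟨lu, hlu⟩ := exists_isFanPath_of_reflTransGen (mem_fan.1 hu)
    obtain ⟨lv, hlv⟩ := exists_isFanPath_of_reflTransGen (mem_fan.1 hv)
    exact disjoint_missingColors_of_isFanPath hno hxr hφ hlu hlv huv
  have hsub : (fan G x φ r).biUnion (missingColors (G.deleteEdges {s(x, r)}) φ G.maxDegree) ⊆
      ((fan G x φ r).erase r).image fun z => φ s(x, z) := by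
    intro c hc
    obtain ⟨v, hv, hcv⟩ := mem_biUnion.1 hc
    have hcx : c ∉ missingColors (G.deleteEdges {s(x, r)}) φ G.maxDegree x := fun hcx => by
      obtain ⟨l, hl⟩ := exists_isFanPath_of_reflTransGen (mem_fan.1 hv)
      exact hno _ (exists_isProperEdgeColoring_of_isFanPath hxr hφ hl hcx hcv).choose_spec
    obtain ⟨z, hxz, rfl⟩ : ∃ z, (G.deleteEdges {s(x, r)}).Adj x z ∧ φ s(x, z) = c := by
      by_contra! h
      exact hcx (mem_missingColors.2 ⟨(mem_missingColors.1 hcv).1, h⟩)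
    refine mem_image.2
      ⟨z, mem_erase.2 ⟨?_, mem_fan.2 (.tail (mem_fan.1 hv) ⟨hxz, hcv⟩)⟩, rfl⟩
    rintro rfl
    exact (deleteEdges_adj.1 hxz).2 rfl
  calc ∑ v ∈ fan G x φ r, #(missingColors (G.deleteEdges {s(x, r)}) φ G.maxDegree v)
      = #((fan G x φ r).biUnion (missingColors (G.deleteEdges {s(x, r)}) φ G.maxDegree)) :=
        (card_biUnion hdisj).symm
    _ ≤ #((fan G x φ r).erase r) := (card_le_card hsub).trans card_image_le
    _ < #(fan G x φ r) := card_erase_lt_of_mem (mem_fan.2 .refl)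

theorem maxDegree_sub_degree_add_one_le_card_fan_filter
    (hno : ∀ ψ, ¬ IsProperEdgeColoring G ψ G.maxDegree)
    (hxr : G.Adj x r) (hφ : IsProperEdgeColoring (G.deleteEdges {s(x, r)}) φ G.maxDegree) :
    G.maxDegree - G.degree r + 1 ≤
      #(((fan G x φ r).erase r).filter fun v => G.degree v = G.maxDegree) := by
  have hr := card_missingColors_add_degree hφ r
  have hdr := degree_deleteEdges_add_one hxr (Sym2.mem_mk_right x r)
  have hsum := sum_card_missingColors_fan_lt hno hxr hφ
  have hΔ := G.degree_le_maxDegree r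
  have hroot : r ∈ fan G x φ r := mem_fan.2 .refl
  rw [← sum_erase_add _ _ hroot, ← card_erase_add_one hroot] at hsum
  calc G.maxDegree - G.degree r + 1
      = #(missingColors (G.deleteEdges {s(x, r)}) φ G.maxDegree r) := by omega
    _ ≤ #(((fan G x φ r).erase r).filter
          fun v => #(missingColors (G.deleteEdges {s(x, r)}) φ G.maxDegree v) = 0) :=
        le_card_filter_eq_zero_of_sum_add_le (by omega)
    _ ≤ #(((fan G x φ r).erase r).filter fun v => G.degree v = G.maxDegree) := by
        refine card_le_card (monotone_filter_right _ fun v hv h0 => ?_)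
        obtain ⟨hvr, hvfan⟩ := mem_erase.1 hv
        have hvx : v ≠ x := (adj_of_mem_fan hvfan hvr).ne.symm
        have hv := card_missingColors_add_degree hφ v
        rw [degree_deleteEdges_of_notMem (by simp [hvx, hvr])] at hv
        omega

end Fan

end

/-- Vizing's Adjacency Lemma: if `e = xy` is a critical edge of a class 2 graph `G`, then
`x` has at least `Δ - d(y) + 1` neighbors of degree `Δ` distinct from `y`. -/
theorem vizing_adjacency {V : Type*} [Fintype V] [DecidableEq V]
    (G : SimpleGraph V) [DecidableRel G.Adj] (x y : V) (he : G.Adj x y)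
    (hclass2 : chromaticIndex G = G.maxDegree + 1)
    (hcrit : chromaticIndex (G.deleteEdges {s(x, y)}) < chromaticIndex G) :
    G.maxDegree - G.degree y + 1 ≤
      (((G.neighborFinset x).filter fun v => G.degree v = G.maxDegree ∧ v ≠ y)).card := by
  have hno : ∀ ψ, ¬ IsProperEdgeColoring G ψ G.maxDegree := fun ψ h => by
    have := chromaticIndex_le h
    omega
  obtain ⟨φ, hφ⟩ := exists_isProperEdgeColoring_chromaticIndex (G.deleteEdges {s(x, y)})
  replace hφ := hφ.mono (k' := G.maxDegree) (by omega)
  refine (maxDegree_sub_degree_add_one_le_card_fan_filter hno he hφ).trans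
    (card_le_card fun v hv => ?_)
  obtain ⟨⟨hvy, hvfan⟩, hdeg⟩ := mem_filter.1 hv |>.imp_left mem_erase.1
  exact mem_filter.2 ⟨(mem_neighborFinset ..).2 (deleteEdges_le _ (adj_of_mem_fan hvfan hvy)),
    hdeg, hvy⟩
end

section
/- Let G be a class 2 graph with critical edge e = rs₀, φ ∈ C^Δ(G−e), and F a maximal multifan at r. Let α, β ∈ φ̄(V(F)) be missing colors of F with α missing at r. Then the vertex of F missing α (namely r) and the vertex of F missing β lie on the same (α,β)-chain of G−e under φ. -/
/-- `s 0, s 1, …, s p` (with the edges `e_i = r s_i`, `e_0 = r s_0` being the uncolored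
edge) forms a multifan at `r` w.r.t. the edge `r s_0` and the coloring `φ` of
`G - r s_0` with colors in `[Δ]`: vertices are distinct, different from `r`, adjacent
to `r`, and for `i ≥ 1` the color `φ(r s_i)` is missing at some earlier `s_j`. -/
def IsMultifan {V : Type*} (G : SimpleGraph V) (φ : Sym2 V → ℕ) (Δ : ℕ)
    (r : V) {p : ℕ} (s : Fin (p + 1) → V) : Prop :=
  Function.Injective s ∧ (∀ i, s i ≠ r) ∧ (∀ i, G.Adj r (s i)) ∧
  ∀ i : Fin (p + 1), i ≠ 0 →
    ∃ j : Fin (p + 1), j < i ∧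
      φ s(r, s i) ∈ missing (G.deleteEdges {s(r, s 0)}) φ Δ (s j)

/-- A multifan at `r` is maximal if it cannot be extended by a further neighbor `t` of
`r` whose edge `r t` is colored with a color missing at some vertex of the fan. -/
def IsMaximalMultifan {V : Type*} (G : SimpleGraph V) (φ : Sym2 V → ℕ) (Δ : ℕ)
    (r : V) {p : ℕ} (s : Fin (p + 1) → V) : Prop :=
  IsMultifan G φ Δ r s ∧
  ∀ t : V, G.Adj r t → t ∉ ({r} ∪ Set.range s : Set V) →
    ∀ j : Fin (p + 1), φ s(r, t) ∉ missing (G.deleteEdges {s(r, s 0)}) φ Δ (s j)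

section AuxMultifan

private lemma aux_pair_ne {V : Type*} (r : V) {p : ℕ} (s : Fin (p + 1) → V)
    (hinj : Function.Injective s) (hner : ∀ i, s i ≠ r)
    {i j : Fin (p + 1)} (hij : i ≠ j) : s(r, s i) ≠ s(r, s j) := by
  intro h
  rcases Sym2.eq_iff.mp h with ⟨-, h2⟩ | ⟨h1, -⟩
  · exact hij (hinj h2)
  · exact hner j h1.symm

private lemma aux_mem_G' {V : Type*} (G : SimpleGraph V) (r : V) {p : ℕ}
    (s : Fin (p + 1) → V)
    (hinj : Function.Injective s) (hner : ∀ i, s i ≠ r)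
    (hadj : ∀ i, G.Adj r (s i)) {i : Fin (p + 1)} (hi : i ≠ 0) :
    s(r, s i) ∈ (G.deleteEdges {s(r, s 0)}).edgeSet := by
  rw [SimpleGraph.edgeSet_deleteEdges]
  exact ⟨(G.mem_edgeSet).mpr (hadj i), by
    simpa using aux_pair_ne r s hinj hner hi⟩

/-- Shifting colors along a multifan: if a color `γ` is missing (w.r.t. `G - rs₀`) at
both `r` and a fan vertex `s t`, then `G` itself admits a proper `Δ`-edge-coloring. -/
private lemma fan_shift {V : Type*} [DecidableEq V] (G : SimpleGraph V) (Δ : ℕ) (r : V)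
    {p : ℕ} (s : Fin (p + 1) → V)
    (hinj : Function.Injective s) (hner : ∀ i, s i ≠ r) (hadj : ∀ i, G.Adj r (s i)) :
    ∀ n : ℕ, ∀ t : Fin (p + 1), t.val ≤ n →
      ∀ ψ : Sym2 V → ℕ,
        IsProperEdgeColoring (G.deleteEdges {s(r, s 0)}) ψ Δ →
        (∀ i : Fin (p + 1), i ≤ t → i ≠ 0 → ∃ j : Fin (p + 1), j < i ∧
            ψ s(r, s i) ∈ missing (G.deleteEdges {s(r, s 0)}) ψ Δ (s j)) →
        ∀ γ : ℕ, γ ∈ missing (G.deleteEdges {s(r, s 0)}) ψ Δ r →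
          γ ∈ missing (G.deleteEdges {s(r, s 0)}) ψ Δ (s t) →
          ∃ χ : Sym2 V → ℕ, IsProperEdgeColoring G χ Δ := by
  have hmem : ∀ h, h ∈ G.edgeSet → h ≠ s(r, s 0) →
      h ∈ (G.deleteEdges {s(r, s 0)}).edgeSet := by
    intro h h1 h2; rw [SimpleGraph.edgeSet_deleteEdges]; exact ⟨h1, by simpa using h2⟩
  have base : ∀ ψ : Sym2 V → ℕ,
      IsProperEdgeColoring (G.deleteEdges {s(r, s 0)}) ψ Δ →
      ∀ γ : ℕ, γ ∈ missing (G.deleteEdges {s(r, s 0)}) ψ Δ r →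
        γ ∈ missing (G.deleteEdges {s(r, s 0)}) ψ Δ (s 0) →
        ∃ χ : Sym2 V → ℕ, IsProperEdgeColoring G χ Δ := by
    intro ψ hψ γ hγr hγ0
    refine ⟨Function.update ψ s(r, s 0) γ, ?_, ?_⟩
    · intro f hf
      by_cases hf0 : f = s(r, s 0)
      · rw [hf0, Function.update_self]; exact hγr.1
      · rw [Function.update_of_ne hf0]
        exact hψ.1 f (hmem f hf hf0)
    · intro f hf g hg hfg hsh
      obtain ⟨u, huf, hug⟩ := hsh
      by_cases hf0 : f = s(r, s 0) <;> by_cases hg0 : g = s(r, s 0)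
      · exact absurd (hf0.trans hg0.symm) hfg
      · rw [hf0, Function.update_self, Function.update_of_ne hg0]
        have hu : u = r ∨ u = s 0 := by rw [hf0] at huf; simpa using huf
        rcases hu with rfl | rfl
        · exact fun h => hγr.2 g (hmem g hg hg0) hug h.symm
        · exact fun h => hγ0.2 g (hmem g hg hg0) hug h.symm
      · rw [hg0, Function.update_self, Function.update_of_ne hf0]
        have hu : u = r ∨ u = s 0 := by rw [hg0] at hug; simpa using hug
        rcases hu with rfl | rfl
        · exact hγr.2 f (hmem f hf hf0) huf
        · exact hγ0.2 f (hmem f hf hf0) huf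
      · rw [Function.update_of_ne hf0, Function.update_of_ne hg0]
        exact hψ.2 f (hmem f hf hf0) g (hmem g hg hg0) hfg ⟨u, huf, hug⟩
  intro n
  induction n with
  | zero =>
    intro t ht ψ hψ _ γ hγr hγt
    have ht0 : t = 0 := Fin.ext (Nat.le_zero.mp ht)
    exact base ψ hψ γ hγr (ht0 ▸ hγt)
  | succ n ih =>
    intro t ht ψ hψ hpre γ hγr hγt
    by_cases ht0 : t = 0
    · exact base ψ hψ γ hγr (ht0 ▸ hγt)
    · obtain ⟨j, hjt, hcm⟩ := hpre t le_rfl ht0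
      have hftG' : s(r, s t) ∈ (G.deleteEdges {s(r, s 0)}).edgeSet :=
        aux_mem_G' G r s hinj hner hadj ht0
      have hrt : (r : V) ∈ s(r, s t) := Sym2.mem_mk_left r (s t)
      have hγc : ψ s(r, s t) ≠ γ := hγr.2 _ hftG' hrt
      have hψ'proper :
          IsProperEdgeColoring (G.deleteEdges {s(r, s 0)})
            (Function.update ψ s(r, s t) γ) Δ := by
        constructor
        · intro f hf
          by_cases hf0 : f = s(r, s t)
          · rw [hf0, Function.update_self]; exact hγr.1
          · rw [Function.update_of_ne hf0]; exact hψ.1 f hf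
        · intro f hf g hg hfg hsh
          obtain ⟨u, huf, hug⟩ := hsh
          by_cases hf0 : f = s(r, s t) <;> by_cases hg0 : g = s(r, s t)
          · exact absurd (hf0.trans hg0.symm) hfg
          · rw [hf0, Function.update_self, Function.update_of_ne hg0]
            have hu : u = r ∨ u = s t := by rw [hf0] at huf; simpa using huf
            rcases hu with rfl | rfl
            · exact fun h => hγr.2 g hg hug h.symm
            · exact fun h => hγt.2 g hg hug h.symm
          · rw [hg0, Function.update_self, Function.update_of_ne hf0]
            have hu : u = r ∨ u = s t := by rw [hg0] at hug; simpa using hug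
            rcases hu with rfl | rfl
            · exact hγr.2 f hf huf
            · exact hγt.2 f hf huf
          · rw [Function.update_of_ne hf0, Function.update_of_ne hg0]
            exact hψ.2 f hf g hg hfg ⟨u, huf, hug⟩
      have hpre' : ∀ i : Fin (p + 1), i ≤ j → i ≠ 0 → ∃ j' : Fin (p + 1), j' < i ∧
          (Function.update ψ s(r, s t) γ) s(r, s i) ∈
            missing (G.deleteEdges {s(r, s 0)}) (Function.update ψ s(r, s t) γ) Δ (s j') := by
        intro i hij hi0
        have hit : i < t := lt_of_le_of_lt hij hjt
        obtain ⟨j', hj'i, hm⟩ := hpre i (le_of_lt hit) hi0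
        have hip : s(r, s i) ≠ s(r, s t) := aux_pair_ne r s hinj hner (Fin.ne_of_lt hit)
        refine ⟨j', hj'i, ?_⟩
        rw [Function.update_of_ne hip]
        refine ⟨hm.1, ?_⟩
        intro f hf hvf
        by_cases hf0 : f = s(r, s t)
        · exfalso
          rw [hf0] at hvf
          rcases (by simpa using hvf : s j' = r ∨ s j' = s t) with h | h
          · exact hner j' h
          · exact (Fin.ne_of_lt (lt_trans hj'i hit)) (hinj h)
        · rw [Function.update_of_ne hf0]
          exact hm.2 f hf hvf
      have hcr : ψ s(r, s t) ∈
          missing (G.deleteEdges {s(r, s 0)}) (Function.update ψ s(r, s t) γ) Δ r := by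
        refine ⟨hψ.1 _ hftG', ?_⟩
        intro f hf hvf
        by_cases hf0 : f = s(r, s t)
        · rw [hf0, Function.update_self]; exact fun h => hγc h.symm
        · rw [Function.update_of_ne hf0]
          exact hψ.2 f hf _ hftG' hf0 ⟨r, hvf, hrt⟩
      have hcj : ψ s(r, s t) ∈
          missing (G.deleteEdges {s(r, s 0)}) (Function.update ψ s(r, s t) γ) Δ (s j) := by
        refine ⟨hψ.1 _ hftG', ?_⟩
        intro f hf hvf
        by_cases hf0 : f = s(r, s t)
        · exfalso
          rw [hf0] at hvf
          rcases (by simpa using hvf : s j = r ∨ s j = s t) with h | h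
          · exact hner j h
          · exact (Fin.ne_of_lt hjt) (hinj h)
        · rw [Function.update_of_ne hf0]
          exact hcm.2 f hf hvf
      have hjn : j.val ≤ n := by
        have h1 : j.val < t.val := hjt
        omega
      exact ih j hjn (Function.update ψ s(r, s t) γ) hψ'proper hpre' (ψ s(r, s t)) hcr hcj

/-- The linkedness part of the multifan lemma. -/
private lemma fan_linked {V : Type*} [DecidableEq V] (G : SimpleGraph V) (Δ : ℕ) (r : V)
    {p : ℕ} (s : Fin (p + 1) → V)
    (hinj : Function.Injective s) (hner : ∀ i, s i ≠ r) (hadj : ∀ i, G.Adj r (s i))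
    (hnocol : ¬ ∃ χ : Sym2 V → ℕ, IsProperEdgeColoring G χ Δ) :
    ∀ n : ℕ, ∀ t : Fin (p + 1), t.val ≤ n →
      ∀ ψ : Sym2 V → ℕ,
        IsProperEdgeColoring (G.deleteEdges {s(r, s 0)}) ψ Δ →
        (∀ i : Fin (p + 1), i ≤ t → i ≠ 0 → ∃ j : Fin (p + 1), j < i ∧
            ψ s(r, s i) ∈ missing (G.deleteEdges {s(r, s 0)}) ψ Δ (s j)) →
        ∀ α β : ℕ, α ∈ missing (G.deleteEdges {s(r, s 0)}) ψ Δ r →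
          β ∈ missing (G.deleteEdges {s(r, s 0)}) ψ Δ (s t) →
          (SimpleGraph.fromEdgeSet
            {f | f ∈ (G.deleteEdges {s(r, s 0)}).edgeSet ∧ (ψ f = α ∨ ψ f = β)}).Reachable
            r (s t) := by
  intro n
  induction n using Nat.strong_induction_on with
  | _ n ih =>
  intro t htn ψ hψ hpre α β hα hβ
  by_cases hab : α = β
  · exact absurd
      (fan_shift G Δ r s hinj hner hadj t.val t le_rfl ψ hψ hpre α hα
        (by rw [hab]; exact hβ)) hnocol
  classical
  set H := SimpleGraph.fromEdgeSet
    {f | f ∈ (G.deleteEdges {s(r, s 0)}).edgeSet ∧ (ψ f = α ∨ ψ f = β)} with hH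
  by_contra hnot
  -- the affected edges: those of the (α,β)-chain through `s t`
  set A : Sym2 V → Prop := fun f =>
    f ∈ (G.deleteEdges {s(r, s 0)}).edgeSet ∧ (ψ f = α ∨ ψ f = β) ∧
      ∃ u, u ∈ f ∧ H.Reachable u (s t) with hAdef
  have hAiff : ∀ f, A f ↔
      (f ∈ (G.deleteEdges {s(r, s 0)}).edgeSet ∧ (ψ f = α ∨ ψ f = β) ∧
        ∃ u, u ∈ f ∧ H.Reachable u (s t)) := fun f => Iff.rfl
  set φ' : Sym2 V → ℕ := fun f => if A f then Equiv.swap α β (ψ f) else ψ f with hφ'def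
  have haff : ∀ f, A f → φ' f = Equiv.swap α β (ψ f) := by
    intro f hA; rw [hφ'def]; exact if_pos hA
  have hnaffv : ∀ f, ¬ A f → φ' f = ψ f := by
    intro f hA; rw [hφ'def]; exact if_neg hA
  have reach_of_aff : ∀ f, A f → ∀ x, x ∈ f → H.Reachable x (s t) := by
    intro f hA x hx
    obtain ⟨hfE, hfc, u, hu, hur⟩ := (hAiff f).mp hA
    by_cases hxu : x = u
    · exact hxu ▸ hur
    · have hadjxu : H.Adj x u := by
        rw [hH, SimpleGraph.fromEdgeSet_adj]
        refine ⟨?_, hxu⟩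
        have hfeq : f = s(x, u) := (Sym2.mem_and_mem_iff hxu).mp ⟨hx, hu⟩
        rw [← hfeq]
        exact ⟨hfE, hfc⟩
      exact hadjxu.reachable.trans hur
  have hunaff : ∀ x, ¬ H.Reachable x (s t) → ∀ f, x ∈ f → φ' f = ψ f := by
    intro x hx f hxf
    exact hnaffv f (fun hA => hx (reach_of_aff f hA x hxf))
  -- the swapped coloring is proper
  have hφ'proper : IsProperEdgeColoring (G.deleteEdges {s(r, s 0)}) φ' Δ := by
    constructor
    · intro f hf
      by_cases hA : A f
      · rw [haff f hA]
        rcases ((hAiff f).mp hA).2.1 with h | h <;> rw [h]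
        · rw [Equiv.swap_apply_left]; exact hβ.1
        · rw [Equiv.swap_apply_right]; exact hα.1
      · rw [hnaffv f hA]; exact hψ.1 f hf
    · intro f hf g hg hfg hsh
      obtain ⟨u, huf, hug⟩ := hsh
      have hbase := hψ.2 f hf g hg hfg ⟨u, huf, hug⟩
      by_cases hAf : A f <;> by_cases hAg : A g
      · rw [haff f hAf, haff g hAg]
        exact fun h => hbase ((Equiv.swap α β).injective h)
      · rw [haff f hAf, hnaffv g hAg]
        intro hEq
        apply hAg
        rw [hAiff]
        refine ⟨hg, ?_, u, hug, reach_of_aff f hAf u huf⟩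
        rcases ((hAiff f).mp hAf).2.1 with h | h
        · right; rw [← hEq, h, Equiv.swap_apply_left]
        · left; rw [← hEq, h, Equiv.swap_apply_right]
      · rw [hnaffv f hAf, haff g hAg]
        intro hEq
        apply hAf
        rw [hAiff]
        refine ⟨hf, ?_, u, huf, reach_of_aff g hAg u hug⟩
        rcases ((hAiff g).mp hAg).2.1 with h | h
        · right; rw [hEq, h, Equiv.swap_apply_left]
        · left; rw [hEq, h, Equiv.swap_apply_right]
      · rw [hnaffv f hAf, hnaffv g hAg]; exact hbase
  -- α is still missing at r
  have hα' : α ∈ missing (G.deleteEdges {s(r, s 0)}) φ' Δ r := by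
    refine ⟨hα.1, ?_⟩
    intro f hf hrf
    rw [hunaff r hnot f hrf]
    exact hα.2 f hf hrf
  -- α is now missing at s t
  have hαt : α ∈ missing (G.deleteEdges {s(r, s 0)}) φ' Δ (s t) := by
    refine ⟨hα.1, ?_⟩
    intro f hf hvf
    by_cases hA : A f
    · rw [haff f hA]
      rcases ((hAiff f).mp hA).2.1 with h | h
      · rw [h, Equiv.swap_apply_left]; exact fun hh => hab hh.symm
      · exact absurd h (hβ.2 f hf hvf)
    · rw [hnaffv f hA]
      intro h
      exact hA ((hAiff f).mpr ⟨hf, Or.inl h, s t, hvf, SimpleGraph.Reachable.refl _⟩)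
  -- the fan prefix is still a multifan
  have hpre' : ∀ i : Fin (p + 1), i ≤ t → i ≠ 0 → ∃ j : Fin (p + 1), j < i ∧
      φ' s(r, s i) ∈ missing (G.deleteEdges {s(r, s 0)}) φ' Δ (s j) := by
    intro i hit hi0
    obtain ⟨j, hji, hm⟩ := hpre i hit hi0
    have hri : (r : V) ∈ s(r, s i) := Sym2.mem_mk_left r (s i)
    have hfi : φ' s(r, s i) = ψ s(r, s i) := hunaff r hnot _ hri
    have hfiG' : s(r, s i) ∈ (G.deleteEdges {s(r, s 0)}).edgeSet :=
      aux_mem_G' G r s hinj hner hadj hi0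
    have hcα : ψ s(r, s i) ≠ α := hα.2 _ hfiG' hri
    by_cases hcβ : ψ s(r, s i) = β
    · -- use the induction hypothesis: r and s j are linked, so s j avoids the chain
      have hjm : j.val < n := by
        have h1 : j.val < i.val := hji
        have h2 : i.val ≤ t.val := hit
        omega
      have hrj : H.Reachable r (s j) := by
        rw [hH]
        exact ih j.val hjm j le_rfl ψ hψ
          (fun i' hi' h0 => hpre i' (le_trans hi' (le_trans hji.le hit)) h0)
          α β hα (by rw [← hcβ]; exact hm)
      have hjnot : ¬ H.Reachable (s j) (s t) := fun h => hnot (hrj.trans h)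
      refine ⟨j, hji, ?_⟩
      rw [hfi]
      refine ⟨hm.1, ?_⟩
      intro f hf hvf
      rw [hunaff (s j) hjnot f hvf]
      exact hm.2 f hf hvf
    · refine ⟨j, hji, ?_⟩
      rw [hfi]
      refine ⟨hm.1, ?_⟩
      intro f hf hvf
      by_cases hA : A f
      · rw [haff f hA]
        rcases ((hAiff f).mp hA).2.1 with h | h <;> rw [h]
        · rw [Equiv.swap_apply_left]; exact fun hh => hcβ hh.symm
        · rw [Equiv.swap_apply_right]; exact fun hh => hcα hh.symm
      · rw [hnaffv f hA]
        exact hm.2 f hf hvf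
  exact hnocol (fan_shift G Δ r s hinj hner hadj t.val t le_rfl φ' hφ'proper hpre' α hα' hαt)

end AuxMultifan

/-- Let `F` be a maximal multifan at `r`, let `α` be missing at `r` and `β` be missing at
a fan vertex `v ∈ V(F)`. Then `r = v_F(α)` and `v = v_F(β)` lie on the same
`(α,β)`-chain of `G - r s₀` under `φ`, i.e. they are connected in the subgraph spanned
by the edges colored `α` or `β`. -/
theorem multifan_linked {V : Type*} [Fintype V] [DecidableEq V]
    (G : SimpleGraph V) [DecidableRel G.Adj] (r : V) {p : ℕ} (s : Fin (p + 1) → V)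
    (hclass2 : chromaticIndex G = G.maxDegree + 1)
    (hcrit : chromaticIndex (G.deleteEdges {s(r, s 0)}) < chromaticIndex G)
    (φ : Sym2 V → ℕ)
    (hφ : IsProperEdgeColoring (G.deleteEdges {s(r, s 0)}) φ G.maxDegree)
    (hF : IsMaximalMultifan G φ G.maxDegree r s)
    (α β : ℕ) (hα : α ∈ missing (G.deleteEdges {s(r, s 0)}) φ G.maxDegree r)
    (v : V) (hv : v ∈ ({r} ∪ Set.range s : Set V))
    (hβ : β ∈ missing (G.deleteEdges {s(r, s 0)}) φ G.maxDegree v) :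
    (SimpleGraph.fromEdgeSet
      {f | f ∈ (G.deleteEdges {s(r, s 0)}).edgeSet ∧ (φ f = α ∨ φ f = β)}).Reachable
      r v := by
  obtain ⟨⟨hinj, hner, hadj, hmf⟩, -⟩ := hF
  have hnocol : ¬ ∃ χ : Sym2 V → ℕ, IsProperEdgeColoring G χ G.maxDegree := by
    rintro ⟨χ, hχ⟩
    have hle : chromaticIndex G ≤ G.maxDegree := Nat.sInf_le ⟨χ, hχ⟩
    omega
  rw [Set.mem_union, Set.mem_singleton_iff, Set.mem_range] at hv
  rcases hv with rfl | ⟨t, rfl⟩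
  · exact SimpleGraph.Reachable.refl v
  · exact fan_linked G G.maxDegree r s hinj hner hadj hnocol t.val t le_rfl φ hφ
      (fun i _ h0 => hmf i h0) α β hα hβ
end
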